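/- arXiv:0807.0360 — 3 statements merged into one kernel-verified Lean document; each statement's English description precedes it below -/
import Mathlib

section
/- Let Ω ⊆ ℝ^N be open and connected, and let P be a relatively closed subset of Ω whose (N-1)-dimensional Hausdorff measure is zero. Then Ω \ P is connected. -/
/-!
If a segment from `a ∉ P` meets `P` at `q`, its endpoint lies in the radial shadow of `P` seen
from `a`, i.e. in the union of the dilates of `P` about `a` by ratios `≥ 1`. Near `a`, `P` is
bounded and at positive distance from `a`, so only a bounded range of ratios matters. Covering
`P` by balls of radii `ρᵢ` with `∑ ρᵢ ^ (N - 1)` small, the shadow of each ball is covered by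
`O(1 / ρᵢ)` balls of radius `O(ρᵢ)`, so the shadow of `P` is Lebesgue-null. Hence two points of a
ball `B ⊆ Ω` off `P` are joined by two segments through a generic point of `B`, and this local
path-connectedness spreads over the connected set `Ω` because `P` has empty interior.
-/

open MeasureTheory Measure Metric Set Filter Topology Module AffineMap
open scoped ENNReal

section Hausdorff

variable {X : Type*} [MetricSpace X] [MeasurableSpace X] [BorelSpace X]

theorem eq_empty_of_hausdorffMeasure_eq_zero {d : ℝ} (hd : d ≤ 0) {s : Set X}
    (hs : μH[d] s = 0) : s = ∅ := by
  by_contra h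
  have := (one_le_hausdorffMeasure_zero_of_nonempty (nonempty_iff_ne_empty.2 h)).trans
    (hausdorffMeasure_mono hd s)
  simp [hs] at this

theorem exists_cover_tsum_ediam_pow_lt_of_hausdorffMeasure_eq_zero {d : ℝ} (hd : 0 < d)
    {s : Set X} (hs : μH[d] s = 0) {ε : ℝ≥0∞} (hε : ε ≠ 0) :
    ∃ t : ℕ → Set X, s ⊆ ⋃ n, t n ∧ (∀ n, t n ⊆ s) ∧ (∀ n, ediam (t n) ≤ 1) ∧
      ∑' n, ediam (t n) ^ d < ε := by
  have hinf : (⨅ (t : ℕ → Set X) (_ : s ⊆ ⋃ n, t n) (_ : ∀ n, ediam (t n) ≤ 1),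
      ∑' n, ⨆ _ : (t n).Nonempty, ediam (t n) ^ d) < ε := by
    refine lt_of_le_of_lt ?_ (pos_iff_ne_zero.2 hε)
    rw [← hs, hausdorffMeasure_apply]
    exact le_iSup₂ (f := fun r (_ : 0 < r) => ⨅ (t : ℕ → Set X) (_ : s ⊆ ⋃ n, t n)
      (_ : ∀ n, ediam (t n) ≤ r), ∑' n, ⨆ _ : (t n).Nonempty, ediam (t n) ^ d) 1 one_pos
  simp only [iInf_lt_iff] at hinf
  obtain ⟨t, hcover, hdiam, hsum⟩ := hinf
  refine ⟨fun n => t n ∩ s, fun x hx => ?_, fun n => inter_subset_right,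
    fun n => (ediam_mono inter_subset_left).trans (hdiam n), lt_of_le_of_lt ?_ hsum⟩
  · obtain ⟨n, hn⟩ := mem_iUnion.1 (hcover hx)
    exact mem_iUnion.2 ⟨n, hn, hx⟩
  · refine ENNReal.tsum_le_tsum fun n => ?_
    rcases (t n ∩ s).eq_empty_or_nonempty with h | h
    · simp [h, ENNReal.zero_rpow_of_pos hd]
    · exact (ENNReal.rpow_le_rpow (ediam_mono inter_subset_left) hd.le).trans
        (le_iSup_of_le (h.mono inter_subset_left) le_rfl)

theorem exists_closedBall_cover_tsum_pow_le_of_hausdorffMeasure_eq_zero {d : ℕ} (hd : d ≠ 0)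
    {s : Set X} (hs : μH[d] s = 0) (hne : s.Nonempty) {ε : ℝ≥0∞} (hε : ε ≠ 0) :
    ∃ (c : ℕ → X) (ρ : ℕ → ℝ), (∀ n, c n ∈ s) ∧ (∀ n, 0 < ρ n ∧ ρ n ≤ 1) ∧
      s ⊆ ⋃ n, closedBall (c n) (ρ n) ∧ ∑' n, ENNReal.ofReal (ρ n) ^ d ≤ ε := by
  have hε2 : ε / 2 ≠ 0 := ENNReal.div_ne_zero.2 ⟨hε, ENNReal.ofNat_ne_top⟩
  obtain ⟨t, hcover, hts, hdiam, hsum⟩ :=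
    exists_cover_tsum_ediam_pow_lt_of_hausdorffMeasure_eq_zero
      (Nat.cast_pos.2 (Nat.pos_of_ne_zero hd)) hs hε2
  obtain ⟨η, hη0, hηsum⟩ := ENNReal.exists_pos_sum_of_countable hε2 ℕ
  have hfin : ∀ n, ediam (t n) ≠ ⊤ := fun n => ne_top_of_le_ne_top ENNReal.one_ne_top (hdiam n)
  classical
  -- Padding the diameters by the summable `η` makes all radii positive.
  refine ⟨fun n => if h : (t n).Nonempty then h.some else hne.some,
    fun n => max (diam (t n)) (min 1 (η n)), fun n => ?_, fun n => ⟨?_, ?_⟩, fun x hx => ?_, ?_⟩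
  · dsimp only
    split_ifs with h
    exacts [hts n h.some_mem, hne.some_mem]
  · exact lt_max_of_lt_right (lt_min one_pos (hη0 n))
  · exact max_le (ENNReal.toReal_le_of_le_ofReal zero_le_one (by simpa using hdiam n))
      (min_le_left _ _)
  · obtain ⟨n, hn⟩ := mem_iUnion.1 (hcover hx)
    refine mem_iUnion.2 ⟨n, ?_⟩
    dsimp only
    rw [dif_pos ⟨x, hn⟩, mem_closedBall]
    exact le_max_of_le_left (dist_le_diam_of_mem (isBounded_iff_ediam_ne_top.2 (hfin n)) hn
      (Nonempty.some_mem _))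
  · calc ∑' n, ENNReal.ofReal (max (diam (t n)) (min 1 (η n))) ^ d
        ≤ ∑' n, (ediam (t n) ^ (d : ℝ) + η n) := ENNReal.tsum_le_tsum fun n => ?_
      _ = ∑' n, ediam (t n) ^ (d : ℝ) + ∑' n, (η n : ℝ≥0∞) := ENNReal.tsum_add
      _ ≤ ε / 2 + ε / 2 := add_le_add hsum.le hηsum.le
      _ = ε := ENNReal.add_halves ε
    have hη1 : ENNReal.ofReal (min 1 (η n)) ≤ 1 := ENNReal.ofReal_le_one.2 (min_le_left _ _)
    rw [ENNReal.ofReal_max, ENNReal.rpow_natCast, diam, ENNReal.ofReal_toReal (hfin n),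
      (Monotone.map_max fun _ _ h => pow_le_pow_left' h d : max _ _ ^ d = _)]
    refine max_le (le_add_right le_rfl) (le_add_left ?_)
    calc ENNReal.ofReal (min 1 (η n)) ^ d ≤ ENNReal.ofReal (min 1 (η n)) :=
          pow_le_of_le_one zero_le hη1 hd
      _ ≤ η n := by
          rw [ENNReal.ofReal_le_iff_le_toReal ENNReal.coe_ne_top]
          exact min_le_right _ _

end Hausdorff

section RadialShadow

variable {E : Type*} [NormedAddCommGroup E] [NormedSpace ℝ E]

def radialShadow (x : E) (M : ℝ) (A : Set E) : Set E :=
  ⋃ t ∈ Icc (1 : ℝ) M, homothety x t '' A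

theorem radialShadow_mono {x : E} {M M' : ℝ} {A B : Set E} (hM : M ≤ M') (hAB : A ⊆ B) :
    radialShadow x M A ⊆ radialShadow x M' B :=
  biUnion_mono (Icc_subset_Icc_right hM) fun _ _ => image_mono hAB

theorem radialShadow_iUnion {ι : Type*} (x : E) (M : ℝ) (s : ι → Set E) :
    radialShadow x M (⋃ i, s i) = ⋃ i, radialShadow x M (s i) := by
  ext z
  simp only [radialShadow, image_iUnion, mem_iUnion]
  exact ⟨fun ⟨t, ht, i, hi⟩ => ⟨i, t, ht, hi⟩, fun ⟨i, t, ht, hi⟩ => ⟨t, ht, i, hi⟩⟩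

theorem disjoint_segment_of_notMem_radialShadow {w z : E} {A : Set E} {δ D : ℝ} (hδ : 0 < δ)
    (hAw : ∀ q ∈ A, δ ≤ dist q w) (hzw : dist z w ≤ D) (hz : z ∉ radialShadow w (D / δ) A) :
    Disjoint (segment ℝ w z) A := by
  rw [segment_eq_image_lineMap, disjoint_left]
  rintro _ ⟨θ, ⟨hθ0, hθ1⟩, rfl⟩ hqA
  have hδθ : δ ≤ θ * dist z w := by
    simpa [dist_comm w z, abs_of_nonneg hθ0] using hAw _ hqA
  have hθ : 0 < θ := pos_of_mul_pos_left (hδ.trans_le hδθ) dist_nonneg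
  refine hz (mem_iUnion₂.2 ⟨θ⁻¹, ⟨one_le_inv₀ hθ |>.2 hθ1, ?_⟩, _, hqA, ?_⟩)
  · rw [le_div_iff₀ hδ]
    calc θ⁻¹ * δ ≤ dist z w := (inv_mul_le_iff₀ hθ).2 hδθ
      _ ≤ D := hzw
  · rw [← homothety_eq_lineMap, ← homothety_mul_apply, inv_mul_cancel₀ hθ.ne', homothety_one]
    rfl

theorem radialShadow_closedBall_subset {x c : E} {R ρ M : ℝ} (hR : 0 < R) (hcx : dist c x ≤ R)
    (hρ : 0 < ρ) :
    radialShadow x M (closedBall c ρ) ⊆ ⋃ j ∈ Finset.range (⌈(M - 1) * R / ρ⌉₊ + 1),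
      closedBall (homothety x (1 + j * (ρ / R)) c) ((M + 1) * ρ) := by
  rintro _ ⟨_, ⟨t, rfl⟩, _, ⟨⟨ht1, htM⟩, rfl⟩, p, hp, rfl⟩
  rw [mem_closedBall] at hp
  -- Sample the ray through `c` at the ratios `1 + j * (ρ / R)`; the ratio `t` is `ρ / R`-close
  -- to the sample with index `j = ⌊(t - 1) * R / ρ⌋`.
  set j := ⌊(t - 1) * R / ρ⌋₊
  have hj : (j : ℝ) * (ρ / R) ≤ t - 1 ∧ t - 1 < (j + 1) * (ρ / R) := by
    have h0 : 0 ≤ (t - 1) * R / ρ := div_nonneg (mul_nonneg (by linarith) hR.le) hρ.le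
    have h1 := Nat.floor_le h0
    have h2 := Nat.lt_floor_add_one ((t - 1) * R / ρ)
    constructor
    · calc (j : ℝ) * (ρ / R) ≤ (t - 1) * R / ρ * (ρ / R) := by gcongr
        _ = t - 1 := by field_simp
    · calc t - 1 = (t - 1) * R / ρ * (ρ / R) := by field_simp
        _ < (j + 1) * (ρ / R) := by gcongr
  refine mem_iUnion₂.2 ⟨j, Finset.mem_range.2 (Nat.lt_succ_of_le ?_), ?_⟩
  · exact (Nat.floor_le_floor (by gcongr)).trans (Nat.floor_le_ceil _)
  rw [mem_closedBall]
  calc dist (homothety x t p) (homothety x (1 + j * (ρ / R)) c)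
      ≤ dist (homothety x t p) (homothety x t c)
        + dist (homothety x t c) (homothety x (1 + j * (ρ / R)) c) := dist_triangle _ _ _
    _ = t * dist p c + (t - (1 + j * (ρ / R))) * dist c x := by
        congr 1
        · simp only [homothety_apply, vsub_eq_sub, vadd_eq_add, dist_eq_norm]
          rw [show t • (p - x) + x - (t • (c - x) + x) = t • (p - c) by module, norm_smul,
            Real.norm_of_nonneg (by linarith)]
        · rw [homothety_eq_lineMap, homothety_eq_lineMap, dist_lineMap_lineMap, Real.dist_eq,
            abs_of_nonneg (by linarith), dist_comm x c]
    _ ≤ M * ρ + ρ / R * R := by gcongr <;> linarith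
    _ = (M + 1) * ρ := by field_simp

variable [FiniteDimensional ℝ E] [MeasurableSpace E] [BorelSpace E]

theorem addHaar_eq_zero_of_hausdorffMeasure_eq_zero (μ : Measure E) [μ.IsAddHaarMeasure]
    {d : ℝ} (hd : d ≤ finrank ℝ E) {s : Set E} (hs : μH[d] s = 0) : μ s = 0 := by
  rw [isAddLeftInvariant_eq_smul μ μH[finrank ℝ E], Measure.smul_apply,
    nonpos_iff_eq_zero.1 (hs ▸ hausdorffMeasure_mono hd s : μH[finrank ℝ E] s ≤ 0), smul_zero]

theorem addHaar_radialShadow_closedBall_le (μ : Measure E) [μ.IsAddHaarMeasure] {d : ℕ}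
    (hd : finrank ℝ E = d + 1) {x c : E} {R ρ M : ℝ} (hR : 0 < R) (hcx : dist c x ≤ R)
    (hρ : 0 < ρ) (hρ1 : ρ ≤ 1) (hM : 1 ≤ M) :
    μ (radialShadow x M (closedBall c ρ)) ≤
      ENNReal.ofReal ((M + 1) ^ (d + 1) * ((M - 1) * R + 2)) * μ (ball 0 1) *
        ENNReal.ofReal ρ ^ d := by
  set K := ⌈(M - 1) * R / ρ⌉₊ + 1
  have hMR : 0 ≤ (M - 1) * R := mul_nonneg (by linarith) hR.le
  have hK : (K : ℝ) * ((M + 1) * ρ) ^ (d + 1) ≤ (M + 1) ^ (d + 1) * ((M - 1) * R + 2) * ρ ^ d :=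
    calc (K : ℝ) * ((M + 1) * ρ) ^ (d + 1)
        ≤ ((M - 1) * R / ρ + 2) * ((M + 1) * ρ) ^ (d + 1) := by
          gcongr
          have := Nat.ceil_lt_add_one (div_nonneg hMR hρ.le)
          simp only [K, Nat.cast_add, Nat.cast_one]
          linarith
      _ = (M + 1) ^ (d + 1) * ((M - 1) * R + 2 * ρ) * ρ ^ d := by
          rw [mul_pow, pow_succ ρ]
          field_simp
      _ ≤ (M + 1) ^ (d + 1) * ((M - 1) * R + 2) * ρ ^ d := by gcongr; linarith
  calc μ (radialShadow x M (closedBall c ρ))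
      ≤ ∑ j ∈ Finset.range K, μ (closedBall (homothety x (1 + j * (ρ / R)) c) ((M + 1) * ρ)) :=
        (measure_mono (radialShadow_closedBall_subset hR hcx hρ)).trans
          (measure_biUnion_finset_le _ _)
    _ = ENNReal.ofReal (K * ((M + 1) * ρ) ^ (d + 1)) * μ (ball 0 1) := by
        simp only [addHaar_closedBall μ _ (by positivity : 0 ≤ (M + 1) * ρ), hd,
          Finset.sum_const, Finset.card_range, nsmul_eq_mul, ENNReal.ofReal_mul (Nat.cast_nonneg _),
          ENNReal.ofReal_natCast, mul_assoc]
    _ ≤ ENNReal.ofReal ((M + 1) ^ (d + 1) * ((M - 1) * R + 2) * ρ ^ d) * μ (ball 0 1) := by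
        gcongr
    _ = _ := by
        rw [ENNReal.ofReal_mul (mul_nonneg (by positivity) (by linarith)),
          ENNReal.ofReal_pow hρ.le]
        ring

theorem addHaar_radialShadow_eq_zero (μ : Measure E) [μ.IsAddHaarMeasure] {d : ℕ}
    (hd : finrank ℝ E = d + 1) {A : Set E} (hA : Bornology.IsBounded A) (hA0 : μH[d] A = 0)
    (x : E) (M : ℝ) : μ (radialShadow x M A) = 0 := by
  rcases A.eq_empty_or_nonempty with rfl | hne
  · simp [radialShadow]
  have hd0 : d ≠ 0 := by
    rintro rfl
    exact hne.ne_empty (eq_empty_of_hausdorffMeasure_eq_zero le_rfl (by simpa using hA0))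
  obtain ⟨R, hR, hAR⟩ := hA.subset_closedBall_lt 0 x
  set M' := max M 1
  refine measure_mono_null (radialShadow_mono (le_max_left M 1) subset_rfl) ?_
  set C := ENNReal.ofReal ((M' + 1) ^ (d + 1) * ((M' - 1) * R + 2)) * μ (ball 0 1)
  have hC0 : C ≠ 0 := by
    have : 0 ≤ M' - 1 := by simp [M']
    exact mul_ne_zero (ENNReal.ofReal_pos.2 (by positivity)).ne' (measure_ball_pos μ 0 one_pos).ne'
  have hCtop : C ≠ ⊤ := ENNReal.mul_ne_top ENNReal.ofReal_ne_top measure_ball_lt_top.ne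
  refine le_antisymm (ENNReal.le_of_forall_pos_le_add fun ε hε _ => ?_) zero_le
  obtain ⟨c, ρ, hcA, hρ, hcover, hsum⟩ :=
    exists_closedBall_cover_tsum_pow_le_of_hausdorffMeasure_eq_zero hd0 hA0 hne (ε := ε / C)
      (ENNReal.div_ne_zero.2 ⟨ENNReal.coe_ne_zero.2 hε.ne', hCtop⟩)
  calc μ (radialShadow x M' A)
      ≤ ∑' n, μ (radialShadow x M' (closedBall (c n) (ρ n))) :=
        (measure_mono ((radialShadow_iUnion x M' _) ▸ radialShadow_mono le_rfl hcover)).trans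
          (measure_iUnion_le _)
    _ ≤ ∑' n, C * ENNReal.ofReal (ρ n) ^ d := ENNReal.tsum_le_tsum fun n =>
        addHaar_radialShadow_closedBall_le μ hd hR (hAR (hcA n)) (hρ n).1 (hρ n).2
          (le_max_right M 1)
    _ = C * ∑' n, ENNReal.ofReal (ρ n) ^ d := ENNReal.tsum_mul_left
    _ ≤ C * (ε / C) := by gcongr
    _ = 0 + ε := by rw [ENNReal.mul_div_cancel hC0 hCtop, zero_add]

theorem isPathConnected_ball_sdiff_of_hausdorffMeasure_eq_zero {d : ℕ}
    (hd : finrank ℝ E = d + 1) {A : Set E} (hA : IsClosed A) {y : E} {r : ℝ} (hr : 0 < r)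
    (hA0 : μH[d] (A ∩ ball y r) = 0) : IsPathConnected (ball y r \ A) := by
  let μ : Measure E := addHaar
  have hgood : ∀ a ∈ ball y r \ A, ∃ S : Set E, μ S = 0 ∧
      ∀ z ∈ ball y r, z ∉ S → JoinedIn (ball y r \ A) a z := by
    rintro a ⟨ha, haA⟩
    obtain ⟨δ, hδ, hδA⟩ := Metric.isOpen_iff.1 hA.isOpen_compl a haA
    refine ⟨radialShadow a (2 * r / δ) (A ∩ ball y r),
      addHaar_radialShadow_eq_zero μ hd (isBounded_ball.subset inter_subset_right) hA0 a _,
      fun z hz hzS => JoinedIn.of_segment_subset fun q hq => ⟨?_, fun hqA => ?_⟩⟩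
    · exact (convex_ball y r).segment_subset ha hz hq
    refine disjoint_left.1 (disjoint_segment_of_notMem_radialShadow hδ (fun q hq => ?_) ?_ hzS) hq
      ⟨hqA, (convex_ball y r).segment_subset ha hz hq⟩
    · exact not_lt.1 fun h => hδA (mem_ball.2 h) hq.1
    · linarith [dist_triangle_right z a y, mem_ball.1 hz, mem_ball.1 ha]
  have hnull : μ (A ∩ ball y r) = 0 :=
    addHaar_eq_zero_of_hausdorffMeasure_eq_zero μ (by rw [hd]; push_cast; linarith) hA0
  have hpos : μ (ball y r) ≠ 0 := (measure_ball_pos μ y hr).ne'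
  refine isPathConnected_iff.2 ⟨?_, fun a ha b hb => ?_⟩
  · rw [← sdiff_inter_self_eq_sdiff]
    exact nonempty_of_measure_ne_zero (by rwa [measure_sdiff_null hnull])
  obtain ⟨Sa, hSa, ha⟩ := hgood a ha
  obtain ⟨Sb, hSb, hb⟩ := hgood b hb
  obtain ⟨z, hz, hzS⟩ : (ball y r \ (Sa ∪ Sb)).Nonempty :=
    nonempty_of_measure_ne_zero (by rwa [measure_sdiff_null (measure_union_null hSa hSb)])
  exact (ha z hz fun h => hzS (Or.inl h)).trans (hb z hz fun h => hzS (Or.inr h)).symm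

end RadialShadow

theorem IsConnected.isPathConnected_sdiff_of_locally {X : Type*} [TopologicalSpace X] {Ω P : Set X}
    (hΩ : IsConnected Ω) (hP : interior P = ∅)
    (hloc : ∀ y ∈ Ω, ∃ U ∈ 𝓝 y, U ⊆ Ω ∧ IsPathConnected (U \ P)) :
    IsPathConnected (Ω \ P) := by
  obtain ⟨y₀, hy₀⟩ := hΩ.nonempty
  obtain ⟨U₀, -, hU₀, hpc₀⟩ := hloc y₀ hy₀
  obtain ⟨x₀, hx₀U, hx₀P⟩ := hpc₀.nonempty
  have hx₀ : x₀ ∈ Ω \ P := ⟨hU₀ hx₀U, hx₀P⟩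
  set S := pathComponentIn (Ω \ P) x₀
  have hx₀S : x₀ ∈ S := JoinedIn.refl hx₀
  set good := {y | ∀ᶠ z in 𝓝 y, z ∉ P → z ∈ S}
  set bad := {y | ∀ᶠ z in 𝓝 y, z ∉ P → z ∉ S}
  have hdisj : Disjoint good bad := by
    refine disjoint_left.2 fun y hgood hbad => ?_
    have : P ∈ 𝓝 y := (hgood.and hbad).mono fun z hz => by_contra fun hzP => hz.2 hzP (hz.1 hzP)
    simpa [hP] using mem_interior_iff_mem_nhds.2 this
  have hcover : Ω ⊆ good ∪ bad := by
    intro y hy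
    obtain ⟨U, hU, hUΩ, hpc⟩ := hloc y hy
    by_cases h : ∃ w ∈ U \ P, w ∈ S
    · obtain ⟨w, hw, hwS⟩ := h
      refine Or.inl (mem_of_superset hU fun z hz hzP => hwS.trans ?_)
      exact (hpc.joinedIn w hw z ⟨hz, hzP⟩).mono (sdiff_subset_sdiff_left hUΩ)
    · exact Or.inr (mem_of_superset hU fun z hz hzP hzS => h ⟨z, ⟨hz, hzP⟩, hzS⟩)
  have hx₀good : x₀ ∈ good :=
    (hcover hx₀.1).resolve_right fun hbad => hbad.self_of_nhds hx₀P hx₀S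
  have hΩgood : Ω ⊆ good := hΩ.isPreconnected.subset_left_of_subset_union
    isOpen_setOfPred_eventually_nhds isOpen_setOfPred_eventually_nhds hdisj hcover
    ⟨x₀, hx₀.1, hx₀good⟩
  exact ⟨x₀, hx₀, fun {_} hy => (hΩgood hy.1).self_of_nhds hy.2⟩

theorem stmt0_general {N : ℕ} (Ω P : Set (EuclideanSpace ℝ (Fin N)))
    (hΩopen : IsOpen Ω) (hΩconn : IsConnected Ω)
    (hPclosed : ∃ C : Set (EuclideanSpace ℝ (Fin N)), IsClosed C ∧ P = C ∩ Ω)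
    (hPnull : μH[(N : ℝ) - 1] P = 0) :
    IsConnected (Ω \ P) := by
  obtain ⟨C, hC, rfl⟩ := hPclosed
  cases N with
  | zero =>
    rw [eq_empty_of_hausdorffMeasure_eq_zero (by norm_num) hPnull, sdiff_empty]
    exact hΩconn
  | succ d =>
    have hP : μH[d] (C ∩ Ω) = 0 := by simpa using hPnull
    have hd : finrank ℝ (EuclideanSpace ℝ (Fin (d + 1))) = d + 1 := finrank_euclideanSpace_fin
    have hvol : volume (C ∩ Ω) = 0 :=
      addHaar_eq_zero_of_hausdorffMeasure_eq_zero volume (by rw [hd]; push_cast; linarith) hP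
    refine IsPathConnected.isConnected <|
      hΩconn.isPathConnected_sdiff_of_locally (interior_eq_empty_of_null hvol) fun y hy => ?_
    obtain ⟨r, hr, hrΩ⟩ := Metric.isOpen_iff.1 hΩopen y hy
    have hball : ball y r \ (C ∩ Ω) = ball y r \ C := by
      rw [sdiff_inter, sdiff_eq_empty.2 hrΩ, union_empty]
    refine ⟨ball y r, ball_mem_nhds y hr, hrΩ, hball ▸ ?_⟩
    exact isPathConnected_ball_sdiff_of_hausdorffMeasure_eq_zero hd hC hr
      (measure_mono_null (inter_subset_inter_right C hrΩ) hP)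

/-- If `Ω ⊆ ℝ^N` is open and connected and `P ⊆ Ω` is relatively closed in `Ω`
with `(N-1)`-dimensional Hausdorff measure zero, then `Ω \ P` is connected. -/
theorem stmt0 {N : ℕ} (hN : 1 ≤ N) (Ω P : Set (EuclideanSpace ℝ (Fin N)))
    (hΩopen : IsOpen Ω) (hΩconn : IsConnected Ω)
    (hPsub : P ⊆ Ω) (hPclosed : ∃ C : Set (EuclideanSpace ℝ (Fin N)), IsClosed C ∧ P = C ∩ Ω)
    (hPnull : μH[(N : ℝ) - 1] P = 0) :
    IsConnected (Ω \ P) :=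
  stmt0_general Ω P hΩopen hΩconn hPclosed hPnull
end

section
/- Let Ω ⊆ ℝ^N be open and bounded, p ∈ (2,∞), and u, v, w ∈ W^{1,p}(Ω). Then lim_{s→0} (𝔞_{p,Ω}(u+sv, w) − 𝔞_{p,Ω}(u, w))/s = 𝔟_{p,Ω}(u,v,w), where 𝔟_{p,Ω}(u,v,w) = (p−1)∫ |u|^{p-2} v w + (p−2)∫ |∇u|^{p-4} ⟨∇u,∇v⟩⟨∇u,∇w⟩ + ∫ |∇u|^{p-2} ⟨∇v,∇w⟩. -/
/-!
Differentiate under the integral sign. On a real inner product space the map `x ↦ ‖x‖ ^ q • x`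
is differentiable for `q > 0` (at `0` it is `o(‖x‖)`), which gives the derivative of the
integrand along `s ↦ u + s v`. For `|s| ≤ 1` that derivative is dominated by
`(p - 1) (‖u‖ + ‖v‖ + ‖w‖) ^ p`, which is integrable because `u, v, w ∈ Lᵖ`.
The zero-order term is the case `E = ℝ` of the gradient term, where
`|u| ^ (p - 4) u v u w = |u| ^ (p - 2) v w` merges the two summands into `(p - 1) |u| ^ (p - 2) v w`.
-/

open MeasureTheory Asymptotics
open scoped RealInnerProductSpace Topology

theorem rpow_mul_mul_le_rpow_add_two {q a b c d : ℝ} (hq : 0 ≤ q) (ha : 0 ≤ a) (had : a ≤ d)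
    (hb : 0 ≤ b) (hbd : b ≤ d) (hc : 0 ≤ c) (hcd : c ≤ d) :
    a ^ q * b * c ≤ d ^ (q + 2) := by
  rcases (ha.trans had).eq_or_lt with rfl | hd
  · rw [le_antisymm hbd hb, mul_zero, zero_mul, Real.zero_rpow (by linarith)]
  calc a ^ q * b * c ≤ d ^ q * d * d := by gcongr
    _ = d ^ (q + 2) := by
      rw [show q + 2 = q + 1 + 1 by ring, Real.rpow_add_one hd.ne', Real.rpow_add_one hd.ne']

theorem abs_rpow_sub_two_mul_self_mul_self {q : ℝ} (hq : q ≠ 0) (a : ℝ) :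
    |a| ^ (q - 2) * a * a = |a| ^ q := by
  rcases eq_or_ne a 0 with rfl | ha
  · simp [Real.zero_rpow hq]
  rw [mul_assoc, ← abs_mul_abs_self, ← mul_assoc, ← Real.rpow_add_one (abs_ne_zero.2 ha),
    ← Real.rpow_add_one (abs_ne_zero.2 ha)]
  ring_nf

section Pointwise

variable {E : Type*} [NormedAddCommGroup E] [InnerProductSpace ℝ E]

theorem hasFDerivAt_norm_rpow_of_ne_zero (q : ℝ) {y : E} (hy : y ≠ 0) :
    HasFDerivAt (fun x : E => ‖x‖ ^ q) ((q * ‖y‖ ^ (q - 2)) • innerSL ℝ y) y := by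
  convert! ((hasStrictFDerivAt_norm_sq y).rpow_const (p := q / 2) (by simp [hy])).hasFDerivAt
    using 0
  simp_rw [← Real.rpow_natCast_mul (norm_nonneg _), ← Nat.cast_smul_eq_nsmul ℝ, smul_smul]
  ring_nf

theorem hasFDerivAt_norm_rpow_smul_self {q : ℝ} (hq : 0 < q) (y : E) :
    HasFDerivAt (fun x : E => ‖x‖ ^ q • x)
      (‖y‖ ^ q • ContinuousLinearMap.id ℝ E + ((q * ‖y‖ ^ (q - 2)) • innerSL ℝ y).smulRight y)
      y := by
  rcases eq_or_ne y 0 with rfl | hy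
  · simp only [norm_zero, Real.zero_rpow hq.ne', zero_smul, map_zero]
    refine HasFDerivAt.of_isLittleO ?_
    have hsmall : (fun x : E => ‖x‖ ^ q) =o[𝓝 0] (fun _ => (1 : ℝ)) :=
      (isLittleO_one_iff ℝ).2 <|
        (continuous_norm.rpow_const fun _ => Or.inr hq.le).tendsto' 0 0 (by simp [hq.ne'])
    simpa using hsmall.smul_isBigO (isBigO_refl (fun x : E => x) _)
  · exact (hasFDerivAt_norm_rpow_of_ne_zero q hy).smul (hasFDerivAt_id y)

theorem hasDerivAt_norm_rpow_mul_inner {q : ℝ} (hq : 0 < q) (a b c : E) (s : ℝ) :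
    HasDerivAt (fun t : ℝ => ‖a + t • b‖ ^ q * ⟪a + t • b, c⟫)
      (q * (‖a + s • b‖ ^ (q - 2) * ⟪a + s • b, b⟫ * ⟪a + s • b, c⟫)
        + ‖a + s • b‖ ^ q * ⟪b, c⟫) s := by
  have hline : HasDerivAt (fun t : ℝ => a + t • b) b s := by
    simpa using ((hasDerivAt_id s).smul_const b).const_add a
  have h := ((hasFDerivAt_norm_rpow_smul_self hq (a + s • b)).comp_hasDerivAt s hline).inner ℝ
    (hasDerivAt_const s c)
  simp only [Function.comp_def, real_inner_smul_left, inner_zero_right, zero_add, add_apply,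
    smul_apply, ContinuousLinearMap.id_apply, ContinuousLinearMap.smulRight_apply,
    innerSL_apply_apply, smul_eq_mul] at h
  exact h.congr_deriv (by rw [inner_add_left, real_inner_smul_left, real_inner_smul_left]; ring)

theorem abs_norm_rpow_mul_inner_le (q : ℝ) (y b c : E) :
    |‖y‖ ^ q * ⟪b, c⟫| ≤ ‖y‖ ^ q * ‖b‖ * ‖c‖ := by
  rw [abs_mul, abs_of_nonneg (by positivity), mul_assoc]
  gcongr
  exact abs_real_inner_le_norm b c

theorem abs_norm_rpow_sub_two_mul_inner_mul_inner_le (q : ℝ) (y b c : E) :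
    |‖y‖ ^ (q - 2) * ⟪y, b⟫ * ⟪y, c⟫| ≤ ‖y‖ ^ q * ‖b‖ * ‖c‖ := by
  rcases eq_or_ne y 0 with rfl | hy
  · simp only [inner_zero_left, mul_zero, abs_zero]
    positivity
  calc |‖y‖ ^ (q - 2) * ⟪y, b⟫ * ⟪y, c⟫|
      = ‖y‖ ^ (q - 2) * |⟪y, b⟫| * |⟪y, c⟫| := by
        rw [abs_mul, abs_mul, abs_of_nonneg (by positivity)]
    _ ≤ ‖y‖ ^ (q - 2) * (‖y‖ * ‖b‖) * (‖y‖ * ‖c‖) := by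
        gcongr <;> exact abs_real_inner_le_norm _ _
    _ = ‖y‖ ^ (q - 2 + 1 + 1) * ‖b‖ * ‖c‖ := by
        rw [Real.rpow_add_one (norm_ne_zero_iff.2 hy), Real.rpow_add_one (norm_ne_zero_iff.2 hy)]
        ring
    _ = ‖y‖ ^ q * ‖b‖ * ‖c‖ := by ring_nf

theorem abs_deriv_norm_rpow_mul_inner_le {q : ℝ} (hq : 0 ≤ q) (a b c : E) {s : ℝ}
    (hs : |s| ≤ 1) :
    |q * (‖a + s • b‖ ^ (q - 2) * ⟪a + s • b, b⟫ * ⟪a + s • b, c⟫) + ‖a + s • b‖ ^ q * ⟪b, c⟫|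
      ≤ (q + 1) * (‖a‖ + ‖b‖ + ‖c‖) ^ (q + 2) := by
  set y := a + s • b
  have hy : ‖y‖ ≤ ‖a‖ + ‖b‖ + ‖c‖ := by
    have : ‖s • b‖ ≤ ‖b‖ := by
      rw [norm_smul, Real.norm_eq_abs]
      exact mul_le_of_le_one_left (norm_nonneg b) hs
    linarith [norm_add_le a (s • b), norm_nonneg c]
  have hprod : ‖y‖ ^ q * ‖b‖ * ‖c‖ ≤ (‖a‖ + ‖b‖ + ‖c‖) ^ (q + 2) :=
    rpow_mul_mul_le_rpow_add_two hq (norm_nonneg y) hy (norm_nonneg b)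
      (by linarith [norm_nonneg a, norm_nonneg c]) (norm_nonneg c)
      (by linarith [norm_nonneg a, norm_nonneg b])
  calc _ ≤ q * |‖y‖ ^ (q - 2) * ⟪y, b⟫ * ⟪y, c⟫| + |‖y‖ ^ q * ⟪b, c⟫| := by
        refine (abs_add_le _ _).trans ?_
        rw [abs_mul, abs_of_nonneg hq]
    _ ≤ q * (‖y‖ ^ q * ‖b‖ * ‖c‖) + ‖y‖ ^ q * ‖b‖ * ‖c‖ := by
        gcongr
        · exact abs_norm_rpow_sub_two_mul_inner_mul_inner_le q y b c
        · exact abs_norm_rpow_mul_inner_le q y b c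
    _ ≤ (q + 1) * (‖a‖ + ‖b‖ + ‖c‖) ^ (q + 2) := by nlinarith

end Pointwise

section Integral

variable {α E F G : Type*} [MeasurableSpace α] {μ : Measure α}
  [NormedAddCommGroup E] [NormedAddCommGroup F] [NormedAddCommGroup G]
  {p : ℝ} {f : α → E} {g : α → F} {h : α → G}

theorem integrable_sum_norm_rpow (hp : 0 < p) (hf : MemLp f (ENNReal.ofReal p) μ)
    (hg : MemLp g (ENNReal.ofReal p) μ) (hh : MemLp h (ENNReal.ofReal p) μ) :
    Integrable (fun x => (‖f x‖ + ‖g x‖ + ‖h x‖) ^ p) μ := by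
  refine (((hf.norm.add hg.norm).add hh.norm).integrable_norm_rpow (by simpa using hp)
    ENNReal.ofReal_ne_top).congr (Filter.Eventually.of_forall fun x => ?_)
  simp only [Pi.add_apply, ENNReal.toReal_ofReal hp.le, Real.norm_eq_abs]
  rw [abs_of_nonneg (by positivity)]

theorem integrable_norm_rpow_sub_two_mul_norm_mul_norm (hp : 2 ≤ p)
    (hf : MemLp f (ENNReal.ofReal p) μ) (hg : MemLp g (ENNReal.ofReal p) μ)
    (hh : MemLp h (ENNReal.ofReal p) μ) :
    Integrable (fun x => ‖f x‖ ^ (p - 2) * ‖g x‖ * ‖h x‖) μ := by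
  refine (integrable_sum_norm_rpow (by linarith) hf hg hh).mono'
    ((((hf.1.norm.aemeasurable.pow_const _).mul hg.1.norm.aemeasurable).mul
      hh.1.norm.aemeasurable).aestronglyMeasurable) (Filter.Eventually.of_forall fun x => ?_)
  have hle := rpow_mul_mul_le_rpow_add_two (sub_nonneg.2 hp) (norm_nonneg (f x))
    (d := ‖f x‖ + ‖g x‖ + ‖h x‖) (by linarith [norm_nonneg (g x), norm_nonneg (h x)])
    (norm_nonneg (g x)) (by linarith [norm_nonneg (f x), norm_nonneg (h x)])
    (norm_nonneg (h x)) (by linarith [norm_nonneg (f x), norm_nonneg (g x)])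
  rw [sub_add_cancel] at hle
  rwa [Real.norm_eq_abs, abs_of_nonneg (by positivity)]

end Integral

section Derivative

variable {α E : Type*} [MeasurableSpace α] {μ : Measure α}
  [NormedAddCommGroup E] [InnerProductSpace ℝ E] {p : ℝ} {f g h : α → E}

theorem integrable_norm_rpow_sub_two_mul_inner (hp : 2 ≤ p)
    (hf : MemLp f (ENNReal.ofReal p) μ) (hg : MemLp g (ENNReal.ofReal p) μ)
    (hh : MemLp h (ENNReal.ofReal p) μ) :
    Integrable (fun x => ‖f x‖ ^ (p - 2) * ⟪g x, h x⟫) μ :=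
  (integrable_norm_rpow_sub_two_mul_norm_mul_norm hp hf hg hh).mono'
    ((hf.1.norm.aemeasurable.pow_const _).aestronglyMeasurable.mul (hg.1.inner hh.1))
    (Filter.Eventually.of_forall fun _ => abs_norm_rpow_mul_inner_le _ _ _ _)

theorem integrable_norm_rpow_sub_four_mul_inner_mul_inner (hp : 2 ≤ p)
    (hf : MemLp f (ENNReal.ofReal p) μ) (hg : MemLp g (ENNReal.ofReal p) μ)
    (hh : MemLp h (ENNReal.ofReal p) μ) :
    Integrable (fun x => ‖f x‖ ^ (p - 4) * ⟪f x, g x⟫ * ⟪f x, h x⟫) μ :=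
  (integrable_norm_rpow_sub_two_mul_norm_mul_norm hp hf hg hh).mono'
    (((hf.1.norm.aemeasurable.pow_const _).aestronglyMeasurable.mul (hf.1.inner hg.1)).mul
      (hf.1.inner hh.1))
    (Filter.Eventually.of_forall fun x => by
      simpa only [Real.norm_eq_abs, show p - 2 - 2 = p - 4 by ring] using
        abs_norm_rpow_sub_two_mul_inner_mul_inner_le (p - 2) (f x) (g x) (h x))

theorem hasDerivAt_integral_norm_rpow_mul_inner (hp : 2 < p)
    (hf : MemLp f (ENNReal.ofReal p) μ) (hg : MemLp g (ENNReal.ofReal p) μ)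
    (hh : MemLp h (ENNReal.ofReal p) μ) :
    HasDerivAt (fun s : ℝ => ∫ x, ‖f x + s • g x‖ ^ (p - 2) * ⟪f x + s • g x, h x⟫ ∂μ)
      ((p - 2) * (∫ x, ‖f x‖ ^ (p - 4) * ⟪f x, g x⟫ * ⟪f x, h x⟫ ∂μ)
        + ∫ x, ‖f x‖ ^ (p - 2) * ⟪g x, h x⟫ ∂μ) 0 := by
  have hq : 0 < p - 2 := by linarith
  have hline (s : ℝ) : AEStronglyMeasurable (fun x => f x + s • g x) μ :=
    hf.1.add (hg.1.const_smul s)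
  have hA := integrable_norm_rpow_sub_four_mul_inner_mul_inner hp.le hf hg hh
  have hB := integrable_norm_rpow_sub_two_mul_inner hp.le hf hg hh
  have hF'0 : Integrable (fun x => (p - 2) * (‖f x‖ ^ (p - 4) * ⟪f x, g x⟫ * ⟪f x, h x⟫)
      + ‖f x‖ ^ (p - 2) * ⟪g x, h x⟫) μ :=
    (hA.const_mul (p - 2)).add hB
  have hbound : Integrable (fun x => (p - 2 + 1) * (‖f x‖ + ‖g x‖ + ‖h x‖) ^ (p - 2 + 2)) μ := by
    simpa only [sub_add_cancel] using (integrable_sum_norm_rpow (by linarith) hf hg hh).const_mul _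
  have hderiv := hasDerivAt_integral_of_dominated_loc_of_deriv_le (μ := μ) (x₀ := 0)
    (F := fun s x => ‖f x + s • g x‖ ^ (p - 2) * ⟪f x + s • g x, h x⟫)
    (F' := fun s x => (p - 2) * (‖f x + s • g x‖ ^ (p - 2 - 2) * ⟪f x + s • g x, g x⟫
      * ⟪f x + s • g x, h x⟫) + ‖f x + s • g x‖ ^ (p - 2) * ⟪g x, h x⟫)
    (Metric.ball_mem_nhds 0 one_pos)
    (Filter.Eventually.of_forall fun s =>
      ((hline s).norm.aemeasurable.pow_const _).aestronglyMeasurable.mul ((hline s).inner hh.1))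
    (by simpa only [zero_smul, add_zero] using integrable_norm_rpow_sub_two_mul_inner hp.le hf hf hh)
    (by simpa only [zero_smul, add_zero, show p - 2 - 2 = p - 4 by ring]
      using hF'0.aestronglyMeasurable)
    (Filter.Eventually.of_forall fun x s hs => by
      rw [Real.norm_eq_abs]
      exact abs_deriv_norm_rpow_mul_inner_le hq.le _ _ _
        (by simpa [Real.dist_eq] using (Metric.mem_ball.1 hs).le))
    hbound
    (Filter.Eventually.of_forall fun x s _ => hasDerivAt_norm_rpow_mul_inner hq _ _ _ s)
  refine hderiv.2.congr_deriv ?_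
  simp only [zero_smul, add_zero, show p - 2 - 2 = p - 4 by ring]
  rw [integral_add (hA.const_mul _) hB, integral_const_mul]

end Derivative

theorem stmt3_general {N : ℕ} (p : ℝ) (hp : 2 < p)
    (Ω : Set (EuclideanSpace ℝ (Fin N)))
    (u v w : EuclideanSpace ℝ (Fin N) → ℝ)
    (Du Dv Dw : EuclideanSpace ℝ (Fin N) → EuclideanSpace ℝ (Fin N))
    (hu : MemLp u (ENNReal.ofReal p) (volume.restrict Ω))
    (hv : MemLp v (ENNReal.ofReal p) (volume.restrict Ω))
    (hw : MemLp w (ENNReal.ofReal p) (volume.restrict Ω))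
    (hDu : MemLp Du (ENNReal.ofReal p) (volume.restrict Ω))
    (hDv : MemLp Dv (ENNReal.ofReal p) (volume.restrict Ω))
    (hDw : MemLp Dw (ENNReal.ofReal p) (volume.restrict Ω)) :
    HasDerivAt
      (fun s : ℝ =>
        (∫ x in Ω, |u x + s * v x| ^ (p - 2) * (u x + s * v x) * w x)
          + ∫ x in Ω, ‖Du x + s • Dv x‖ ^ (p - 2) * ⟪Du x + s • Dv x, Dw x⟫)
      ((p - 1) * (∫ x in Ω, |u x| ^ (p - 2) * v x * w x)
        + (p - 2) * (∫ x in Ω, ‖Du x‖ ^ (p - 4) * ⟪Du x, Dv x⟫ * ⟪Du x, Dw x⟫)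
        + ∫ x in Ω, ‖Du x‖ ^ (p - 2) * ⟪Dv x, Dw x⟫) 0 := by
  have hvalue := hasDerivAt_integral_norm_rpow_mul_inner hp hu hv hw
  have hgrad := hasDerivAt_integral_norm_rpow_mul_inner hp hDu hDv hDw
  have hlead (a b c : ℝ) : |a| ^ (p - 4) * a * b * a * c = |a| ^ (p - 2) * b * c := by
    rw [← abs_rpow_sub_two_mul_self_mul_self (sub_ne_zero.2 hp.ne') a,
      show p - 2 - 2 = p - 4 by ring]
    ring
  simp only [Real.norm_eq_abs, smul_eq_mul, Real.inner_apply, ← mul_assoc, hlead] at hvalue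
  exact (hvalue.add hgrad).congr_deriv (by ring)

/-- For `p ∈ (2,∞)` and `u, v, w ∈ W^{1,p}(Ω)` (with weak gradients `Du, Dv, Dw`),
the map `s ↦ 𝔞_{p,Ω}(u + s v, w)` has derivative `𝔟_{p,Ω}(u,v,w)` at `s = 0`. -/
theorem stmt3 {N : ℕ} (p : ℝ) (hp : 2 < p)
    (Ω : Set (EuclideanSpace ℝ (Fin N))) (hΩ : IsOpen Ω) (hΩb : Bornology.IsBounded Ω)
    (u v w : EuclideanSpace ℝ (Fin N) → ℝ)
    (Du Dv Dw : EuclideanSpace ℝ (Fin N) → EuclideanSpace ℝ (Fin N))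
    (hu : MemLp u (ENNReal.ofReal p) (volume.restrict Ω))
    (hv : MemLp v (ENNReal.ofReal p) (volume.restrict Ω))
    (hw : MemLp w (ENNReal.ofReal p) (volume.restrict Ω))
    (hDu : MemLp Du (ENNReal.ofReal p) (volume.restrict Ω))
    (hDv : MemLp Dv (ENNReal.ofReal p) (volume.restrict Ω))
    (hDw : MemLp Dw (ENNReal.ofReal p) (volume.restrict Ω)) :
    HasDerivAt
      (fun s : ℝ =>
        (∫ x in Ω, |u x + s * v x| ^ (p - 2) * (u x + s * v x) * w x)
          + ∫ x in Ω, ‖Du x + s • Dv x‖ ^ (p - 2) * ⟪Du x + s • Dv x, Dw x⟫)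
      ((p - 1) * (∫ x in Ω, |u x| ^ (p - 2) * v x * w x)
        + (p - 2) * (∫ x in Ω, ‖Du x‖ ^ (p - 4) * ⟪Du x, Dv x⟫ * ⟪Du x, Dw x⟫)
        + ∫ x in Ω, ‖Du x‖ ^ (p - 2) * ⟪Dv x, Dw x⟫) 0 :=
  stmt3_general p hp Ω u v w Du Dv Dw hu hv hw hDu hDv hDw
end

section
/- Let ξ : Ω → ℝ^N be a C¹ map on an open connected set Ω ⊆ ℝ^N such that for every x ∈ Ω the derivative ξ'(x) is an orthogonal matrix. Then ξ is locally a rigid motion; in fact ξ is the restriction of a map x ↦ Ax + b with A a fixed orthogonal matrix and b ∈ ℝ^N. -/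
/-!
Each `ξ'(x)` is a linear isometry, so by the mean value inequality `ξ` is `1`-Lipschitz on balls
in `Ω`, and so is its local inverse given by the inverse function theorem: `ξ` preserves
distances on small balls. Polarization then shows that `ξ` preserves inner products of
differences from the centre `c` of such a ball, and differentiating this identity at `c` forces
`ξ x = ξ'(c) (x - c) + ξ c` on the ball. Hence `ξ'` is locally constant, thus constant on the
connected set `Ω`, and `ξ` differs from this constant linear isometry by a constant.
-/

open scoped RealInnerProductSpace
open Metric Set Filter Topology

theorem IsOpen.eqOn_const_of_eventuallyEq {E G : Type*} [NormedAddCommGroup E] [NormedSpace ℝ E]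
    [NormedAddCommGroup G] [NormedSpace ℝ G] {s : Set E} (hs : IsOpen s) (hs' : IsPreconnected s)
    {f : E → G} (hf : ∀ x ∈ s, f =ᶠ[𝓝 x] fun _ ↦ f x) {c : E} (hc : c ∈ s) :
    EqOn f (fun _ ↦ f c) s := by
  have hzero : ∀ x ∈ s, HasFDerivAt f (0 : E →L[ℝ] G) x := fun x hx ↦
    (hasFDerivAt_const (f x) x).congr_of_eventuallyEq (hf x hx)
  exact fun x hx ↦ hs.is_const_of_fderiv_eq_zero hs'
    (fun y hy ↦ (hzero y hy).differentiableAt.differentiableWithinAt)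
    (fun y hy ↦ (hzero y hy).fderiv) hx hc

section InnerProductSpace

variable {E F : Type*} [NormedAddCommGroup E] [InnerProductSpace ℝ E]
  [NormedAddCommGroup F] [InnerProductSpace ℝ F]

theorem real_inner_eq_of_norm_eq_of_norm_sub_eq {u v : E} {u' v' : F} (hu : ‖u'‖ = ‖u‖)
    (hv : ‖v'‖ = ‖v‖) (huv : ‖u' - v'‖ = ‖u - v‖) : ⟪u', v'⟫ = ⟪u, v⟫ := by
  rw [real_inner_eq_norm_mul_self_add_norm_mul_self_sub_norm_sub_mul_self_div_two,
    real_inner_eq_norm_mul_self_add_norm_mul_self_sub_norm_sub_mul_self_div_two, hu, hv, huv]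

theorem eqOn_ball_of_norm_sub_eq {f : E → F} {L : E →L[ℝ] F} {c : E} {ρ : ℝ}
    (hf : HasFDerivAt f L c) (hL : ∀ v, ‖L v‖ = ‖v‖)
    (hiso : ∀ x ∈ ball c ρ, ∀ y ∈ ball c ρ, ‖f x - f y‖ = ‖x - y‖) :
    EqOn f (fun x ↦ L (x - c) + f c) (ball c ρ) := by
  intro x hx
  have hc : c ∈ ball c ρ := mem_ball_self (pos_of_mem_ball hx)
  set u := f x - f c
  set v := x - c
  have hinner : ∀ z ∈ ball c ρ, ⟪u, f z - f c⟫ = ⟪v, z - c⟫ := fun z hz ↦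
    real_inner_eq_of_norm_eq_of_norm_sub_eq (hiso x hx c hc) (hiso z hz c hc)
      (by rw [sub_sub_sub_cancel_right, sub_sub_sub_cancel_right, hiso x hx z hz])
  -- `z ↦ ⟪u, f z⟫ - ⟪v, z⟫` is constant near `c`, so its derivative there vanishes
  have hderiv : (innerSL ℝ u).comp L - innerSL ℝ v = 0 := by
    have hφ : HasFDerivAt (fun z ↦ ⟪u, f z⟫ - ⟪v, z⟫) ((innerSL ℝ u).comp L - innerSL ℝ v) c :=
      ((innerSL ℝ u).hasFDerivAt.comp c hf).sub (innerSL ℝ v).hasFDerivAt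
    refine hφ.unique ((hasFDerivAt_const (⟪u, f c⟫ - ⟪v, c⟫) c).congr_of_eventuallyEq ?_)
    filter_upwards [isOpen_ball.mem_nhds hc] with z hz
    rw [sub_eq_sub_iff_sub_eq_sub, ← inner_sub_right, ← inner_sub_right, hinner z hz]
  have huLv : ⟪u, L v⟫ = ‖v‖ ^ 2 := by
    have := congrArg (· v) hderiv
    simp only [sub_apply, ContinuousLinearMap.comp_apply, innerSL_apply_apply, zero_apply,
      sub_eq_zero] at this
    rw [this, real_inner_self_eq_norm_sq]
  have hsq : ‖u - L v‖ ^ 2 = 0 := by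
    rw [norm_sub_sq_real, huLv, show ‖u‖ = ‖v‖ from hiso x hx c hc, hL]
    ring
  have huv : u = L v := sub_eq_zero.mp <| norm_eq_zero.mp <| (pow_eq_zero_iff two_ne_zero).mp hsq
  show f x = L v + f c
  rw [← huv, sub_add_cancel]

end InnerProductSpace

section FiniteDimensional

variable {E : Type*} [NormedAddCommGroup E] [InnerProductSpace ℝ E] [FiniteDimensional ℝ E]

theorem ContinuousLinearMap.exists_linearIsometryEquiv_of_norm_map {L : E →L[ℝ] E}
    (hL : ∀ v, ‖L v‖ = ‖v‖) : ∃ e : E ≃ₗᵢ[ℝ] E, (e.toContinuousLinearEquiv : E →L[ℝ] E) = L :=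
  ⟨LinearIsometry.toLinearIsometryEquiv ⟨L.toLinearMap, hL⟩ rfl, rfl⟩

variable {Ω : Set E} {ξ : E → E}

theorem exists_ball_norm_sub_eq_of_norm_fderiv_apply (hΩ : IsOpen Ω) (hξ : ContDiffOn ℝ 1 ξ Ω)
    (hnorm : ∀ x ∈ Ω, ∀ v, ‖fderiv ℝ ξ x v‖ = ‖v‖) {c : E} (hc : c ∈ Ω) :
    ∃ ρ > 0, ∀ x ∈ ball c ρ, ∀ y ∈ ball c ρ, ‖ξ x - ξ y‖ = ‖x - y‖ := by
  choose! D hD using fun x hx ↦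
    ContinuousLinearMap.exists_linearIsometryEquiv_of_norm_map (hnorm x hx)
  have hderiv : ∀ x ∈ Ω, HasFDerivAt ξ ((D x).toContinuousLinearEquiv : E →L[ℝ] E) x := fun x hx ↦
    hD x hx ▸ ((hξ.contDiffAt (hΩ.mem_nhds hx)).differentiableAt one_ne_zero).hasFDerivAt
  have hstrict : HasStrictFDerivAt ξ ((D c).toContinuousLinearEquiv : E →L[ℝ] E) c :=
    (hξ.contDiffAt (hΩ.mem_nhds hc)).hasStrictFDerivAt' (hderiv c hc) one_ne_zero
  set T := hstrict.toOpenPartialHomeomorph ξ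
  have hcT : c ∈ T.source := hstrict.mem_toOpenPartialHomeomorph_source
  have hleft : ∀ x ∈ T.source, T.symm (ξ x) = x := fun x hx ↦ T.left_inv hx
  obtain ⟨σ, hσ, hσT⟩ := Metric.isOpen_iff.mp (T.isOpen_inter_preimage_symm hΩ) (ξ c)
    ⟨T.map_source hcT, by rw [mem_preimage, hleft c hcT]; exact hc⟩
  -- on `ball (ξ c) σ` the local inverse has derivative `(D _).symm`, of norm at most `1`
  have hsymm : ∀ y ∈ ball (ξ c) σ, ∀ y' ∈ ball (ξ c) σ, ‖T.symm y - T.symm y'‖ ≤ ‖y - y'‖ := by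
    intro y hy y' hy'
    simpa using (convex_ball (ξ c) σ).norm_image_sub_le_of_norm_hasFDerivWithin_le
      (f' := fun z ↦ ((D (T.symm z)).toContinuousLinearEquiv.symm : E →L[ℝ] E))
      (fun z hz ↦ (T.hasFDerivAt_symm (hσT hz).1 (hderiv _ (hσT hz).2)).hasFDerivWithinAt)
      (fun z _ ↦ (D (T.symm z)).symm.toLinearIsometry.norm_toContinuousLinearMap_le) hy' hy
  have hnear : ∀ᶠ x in 𝓝 c, x ∈ Ω ∧ x ∈ T.source ∧ ξ x ∈ ball (ξ c) σ :=
    (hΩ.eventually_mem hc).and ((T.open_source.eventually_mem hcT).and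
      ((hderiv c hc).continuousAt.eventually_mem (ball_mem_nhds _ hσ)))
  obtain ⟨ρ, hρ, hρc⟩ := eventually_nhds_iff_ball.mp hnear
  refine ⟨ρ, hρ, fun x hx y hy ↦ le_antisymm ?_ ?_⟩
  · simpa using (convex_ball c ρ).norm_image_sub_le_of_norm_hasFDerivWithin_le
      (fun z hz ↦ (hderiv z (hρc z hz).1).hasFDerivWithinAt)
      (fun z _ ↦ (D z).toLinearIsometry.norm_toContinuousLinearMap_le) hy hx
  · calc ‖x - y‖ = ‖T.symm (ξ x) - T.symm (ξ y)‖ := by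
          rw [hleft x (hρc x hx).2.1, hleft y (hρc y hy).2.1]
      _ ≤ ‖ξ x - ξ y‖ := hsymm _ (hρc x hx).2.2 _ (hρc y hy).2.2

theorem fderiv_eventuallyEq_of_norm_fderiv_apply (hΩ : IsOpen Ω) (hξ : ContDiffOn ℝ 1 ξ Ω)
    (hnorm : ∀ x ∈ Ω, ∀ v, ‖fderiv ℝ ξ x v‖ = ‖v‖) {c : E} (hc : c ∈ Ω) :
    fderiv ℝ ξ =ᶠ[𝓝 c] fun _ ↦ fderiv ℝ ξ c := by
  obtain ⟨ρ, hρ, hiso⟩ := exists_ball_norm_sub_eq_of_norm_fderiv_apply hΩ hξ hnorm hc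
  have hξc : HasFDerivAt ξ (fderiv ℝ ξ c) c :=
    ((hξ.contDiffAt (hΩ.mem_nhds hc)).differentiableAt one_ne_zero).hasFDerivAt
  have haff := eqOn_ball_of_norm_sub_eq hξc (hnorm c hc) hiso
  filter_upwards [ball_mem_nhds c hρ] with x hx
  rw [(haff.eventuallyEq_of_mem (isOpen_ball.mem_nhds hx)).fderiv_eq]
  exact ((fderiv ℝ ξ c).hasFDerivAt.comp x ((hasFDerivAt_id x).sub_const c)).add_const (ξ c)
    |>.fderiv

end FiniteDimensional

/-- Liouville-type rigidity: if `ξ : Ω → ℝ^N` is `C¹` on an open connected set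
`Ω ⊆ ℝ^N` and `ξ'(x)` is an orthogonal matrix for every `x ∈ Ω`, then `ξ` is
(the restriction of) a rigid motion `x ↦ A x + b` with `A` a fixed linear
isometry and `b ∈ ℝ^N`. -/
theorem stmt11 {N : ℕ} (Ω : Set (EuclideanSpace ℝ (Fin N)))
    (hΩopen : IsOpen Ω) (hΩconn : IsConnected Ω)
    (ξ : EuclideanSpace ℝ (Fin N) → EuclideanSpace ℝ (Fin N))
    (hξ : ContDiffOn ℝ 1 ξ Ω)
    (horth : ∀ x ∈ Ω, ∀ v w : EuclideanSpace ℝ (Fin N),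
      ⟪fderiv ℝ ξ x v, fderiv ℝ ξ x w⟫ = ⟪v, w⟫) :
    ∃ (A : EuclideanSpace ℝ (Fin N) →ₗᵢ[ℝ] EuclideanSpace ℝ (Fin N))
      (b : EuclideanSpace ℝ (Fin N)), ∀ x ∈ Ω, ξ x = A x + b := by
  have hnorm : ∀ x ∈ Ω, ∀ v, ‖fderiv ℝ ξ x v‖ = ‖v‖ := fun x hx ↦
    ((fderiv ℝ ξ x).toLinearMap.isometryOfInner (horth x hx)).norm_map
  obtain ⟨c, hc⟩ := hΩconn.nonempty
  have hA : EqOn (fderiv ℝ ξ) (fun _ ↦ fderiv ℝ ξ c) Ω :=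
    hΩopen.eqOn_const_of_eventuallyEq hΩconn.isPreconnected
      (fun x hx ↦ fderiv_eventuallyEq_of_norm_fderiv_apply hΩopen hξ hnorm hx) hc
  obtain ⟨b, hb⟩ := hΩopen.exists_eq_add_of_fderiv_eq hΩconn.isPreconnected
    (hξ.differentiableOn one_ne_zero) (fderiv ℝ ξ c).differentiableOn
    (fun x hx ↦ (hA hx).trans (fderiv ℝ ξ c).fderiv.symm)
  exact ⟨(fderiv ℝ ξ c).toLinearMap.isometryOfInner (horth c hc), b, hb⟩
end
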